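/- arXiv:math/0610679 — 5 statements merged into one kernel-verified Lean document; each statement's English description precedes it below -/
import Mathlib

section
/- With f_Σ as in the hidden variable model parameterization, if θ₀ ∈ ℝ⁴ × (0,∞)⁴ has β₄₀ = 0 and β₃₀ ≠ 0 and (β₁₀, β₂₀) ≠ (0,0), then the fiber f_Σ⁻¹(f_Σ(θ₀)) is infinite; in particular the model is not locally identifiable at θ₀. -/
/-!
The hidden variable `H` can be rescaled by any `t ≠ 0`: dividing the edges `X₁, X₂ → H` by `t`,
multiplying the edges `H → X₃, X₄` by `t` and letting `ω₃, ω₄` absorb the change of `Var H` preserves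
every entry of `f_Σ` except `f₃₄ = β₃β₄ q`, which is preserved too when `β₄ = 0`. For `0 < t ≤ 1` all
variances stay positive, and since `β₃ ≠ 0` distinct `t` give distinct parameters, so this curve
through `θ₀` lies in the fiber, is injective, and accumulates at `θ₀` as `t → 1`.
-/

open Matrix

/-- The covariance parameterization of the hidden variable model
`X₁, X₂ → H → X₃, X₄` (with `Var[H | X₁,X₂] = 1`). -/
noncomputable def fSigma (b w : Fin 4 → ℝ) : Matrix (Fin 4) (Fin 4) ℝ :=
  let q : ℝ := (b 0) ^ 2 * w 0 + (b 1) ^ 2 * w 1 + 1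
  !![w 0, 0, b 2 * b 0 * w 0, b 3 * b 0 * w 0;
     0, w 1, b 2 * b 1 * w 1, b 3 * b 1 * w 1;
     b 2 * b 0 * w 0, b 2 * b 1 * w 1, w 2 + (b 2) ^ 2 * q, b 3 * b 2 * q;
     b 3 * b 0 * w 0, b 3 * b 1 * w 1, b 3 * b 2 * q, w 3 + (b 3) ^ 2 * q]

open Filter Set Topology

theorem exists_ne_mem_of_continuousAt_of_injOn {X : Type*} [TopologicalSpace X] {γ : ℝ → X}
    {s : Set ℝ} {a : ℝ} (ha : a ∈ s) (hacc : (𝓝[s \ {a}] a).NeBot) (hγ : ContinuousAt γ a)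
    (hinj : InjOn γ s) {U : Set X} (hU : U ∈ 𝓝 (γ a)) :
    ∃ t ∈ s, γ t ≠ γ a ∧ γ t ∈ U := by
  have hnear : ∀ᶠ t in 𝓝[s \ {a}] a, γ t ∈ U :=
    (hγ.tendsto.mono_left nhdsWithin_le_nhds).eventually hU
  obtain ⟨t, ⟨hts, hta⟩, htU⟩ := (eventually_mem_nhdsWithin.and hnear).exists
  exact ⟨t, hts, fun h => hta (hinj hts ha h), htU⟩

section RescaleHidden

noncomputable def rescaleHidden (b w : Fin 4 → ℝ) (t : ℝ) : (Fin 4 → ℝ) × (Fin 4 → ℝ) :=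
  (![b 0 / t, b 1 / t, t * b 2, t * b 3],
   ![w 0, w 1, w 2 + b 2 ^ 2 * (1 - t ^ 2), w 3 + b 3 ^ 2 * (1 - t ^ 2)])

variable (b w : Fin 4 → ℝ)

theorem rescaleHidden_one : rescaleHidden b w 1 = (b, w) := by
  refine Prod.ext ?_ ?_ <;> funext i <;> fin_cases i <;> simp [rescaleHidden]

theorem fSigma_rescaleHidden (hb : b 3 = 0) {t : ℝ} (ht : t ≠ 0) :
    fSigma (rescaleHidden b w t).1 (rescaleHidden b w t).2 = fSigma b w := by
  ext i j
  fin_cases i <;> fin_cases j <;> simp [fSigma, rescaleHidden, hb, -mul_eq_mul_right_iff] <;> grind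

theorem rescaleHidden_pos (hw : ∀ i, 0 < w i) {t : ℝ} (ht : t ∈ Ioc (0 : ℝ) 1) :
    ∀ i, 0 < (rescaleHidden b w t).2 i := by
  have hsq : 0 ≤ 1 - t ^ 2 := by nlinarith [ht.1, ht.2]
  intro i
  fin_cases i <;> simp only [rescaleHidden, Fin.isValue] <;>
    first | exact hw _ | exact add_pos_of_pos_of_nonneg (hw _) (by positivity)

theorem rescaleHidden_injective (hb : b 2 ≠ 0) : Function.Injective (rescaleHidden b w) :=
  fun s t hst => mul_right_cancel₀ hb (by simpa [rescaleHidden] using congrArg (·.1 2) hst)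

theorem continuousAt_rescaleHidden {t : ℝ} (ht : t ≠ 0) : ContinuousAt (rescaleHidden b w) t := by
  unfold rescaleHidden
  fun_prop (disch := exact ht)

end RescaleHidden

theorem stmt4_general (b0 w0 : Fin 4 → ℝ) (hw0 : ∀ i, 0 < w0 i)
    (hb4 : b0 3 = 0) (hb3 : b0 2 ≠ 0) :
    Set.Infinite {θ : (Fin 4 → ℝ) × (Fin 4 → ℝ) |
        (∀ i, 0 < θ.2 i) ∧ fSigma θ.1 θ.2 = fSigma b0 w0} ∧
      ∀ ε > (0 : ℝ), ∃ θ : (Fin 4 → ℝ) × (Fin 4 → ℝ),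
        (∀ i, 0 < θ.2 i) ∧ fSigma θ.1 θ.2 = fSigma b0 w0 ∧ θ ≠ (b0, w0) ∧
          dist θ (b0, w0) < ε := by
  have hfiber : ∀ t ∈ Ioc (0 : ℝ) 1, (∀ i, 0 < (rescaleHidden b0 w0 t).2 i) ∧
      fSigma (rescaleHidden b0 w0 t).1 (rescaleHidden b0 w0 t).2 = fSigma b0 w0 :=
    fun t ht => ⟨rescaleHidden_pos b0 w0 hw0 ht, fSigma_rescaleHidden b0 w0 hb4 ht.1.ne'⟩
  have hinj := (rescaleHidden_injective b0 w0 hb3).injOn (s := Ioc 0 1)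
  refine ⟨infinite_of_injOn_mapsTo hinj hfiber (Ioc_infinite zero_lt_one), fun ε hε => ?_⟩
  have hacc : (𝓝[Ioc (0 : ℝ) 1 \ {1}] 1).NeBot := by
    refine (nhdsLT_neBot (1 : ℝ)).mono (nhdsWithin_le_of_mem ?_)
    rw [Ioc_sdiff_right]
    exact Ioo_mem_nhdsLT zero_lt_one
  obtain ⟨t, ht, hne, hdist⟩ := exists_ne_mem_of_continuousAt_of_injOn
    (right_mem_Ioc.2 zero_lt_one) hacc (continuousAt_rescaleHidden b0 w0 one_ne_zero) hinj
    (Metric.ball_mem_nhds _ hε)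
  rw [rescaleHidden_one] at hne hdist
  exact ⟨_, (hfiber t ht).1, (hfiber t ht).2, hne, hdist⟩

/-- If `θ₀ = (β₀, ω₀) ∈ ℝ⁴ × (0,∞)⁴` has `β₄₀ = 0`, `β₃₀ ≠ 0` and
`(β₁₀, β₂₀) ≠ (0,0)`, then the fiber `f_Σ⁻¹(f_Σ(θ₀))` (inside the parameter domain)
is infinite; in particular, the model is not locally identifiable at `θ₀`: every
ball around `θ₀` contains another point of the fiber. -/
theorem stmt4 (b0 w0 : Fin 4 → ℝ) (hw0 : ∀ i, 0 < w0 i)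
    (hb4 : b0 3 = 0) (hb3 : b0 2 ≠ 0) (hb12 : ¬(b0 0 = 0 ∧ b0 1 = 0)) :
    Set.Infinite {θ : (Fin 4 → ℝ) × (Fin 4 → ℝ) |
        (∀ i, 0 < θ.2 i) ∧ fSigma θ.1 θ.2 = fSigma b0 w0} ∧
      ∀ ε > (0 : ℝ), ∃ θ : (Fin 4 → ℝ) × (Fin 4 → ℝ),
        (∀ i, 0 < θ.2 i) ∧ fSigma θ.1 θ.2 = fSigma b0 w0 ∧ θ ≠ (b0, w0) ∧
          dist θ (b0, w0) < ε :=
  stmt4_general b0 w0 hw0 hb4 hb3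
end

section
/- For every θ ∈ ℝ⁴ × (0,∞)⁴, the matrix f_Σ(θ) of the hidden variable model parameterization is symmetric positive definite. -/
/-!
Solving the structural equations `X₁ = ε₁`, `X₂ = ε₂`, `H = β₁X₁ + β₂X₂ + ε_H`,
`X₃ = β₃H + ε₃`, `X₄ = β₄H + ε₄` gives `X = (1 + c aᵀ) ε + c ε_H`, where `a = (β₁, β₂, 0, 0)`
regresses `H` on `X` and `c = (0, 0, β₃, β₄)` loads `X` on `H`. Hence
`f_Σ = L diag(ω) Lᵀ + c cᵀ` with `L = 1 + c aᵀ`. Since `aᵀ c = 0`, the matrix `c aᵀ` squares to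
zero, so `L` is invertible: the first summand is positive definite, the second positive
semidefinite.
-/

open Matrix

namespace Matrix

variable {n R : Type*} [Fintype n] [DecidableEq n] [CommRing R]

theorem isUnit_one_add_vecMulVec_of_dotProduct_eq_zero {u v : n → R} (h : v ⬝ᵥ u = 0) :
    IsUnit (1 + vecMulVec u v) :=
  IsNilpotent.isUnit_one_add ⟨2, by rw [sq, vecMulVec_mul_vecMulVec, h, zero_smul, vecMulVec_zero]⟩

theorem PosDef.mul_mul_conjTranspose_add_vecMulVec [PartialOrder R] [StarRing R]
    [StarOrderedRing R] {D L : Matrix n n R} (hD : D.PosDef) (hL : IsUnit L) (u : n → R) :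
    (L * D * Lᴴ + vecMulVec u (star u)).PosDef :=
  (hD.mul_mul_conjTranspose_same (vecMul_injective_of_isUnit hL)).add_posSemidef
    (posSemidef_vecMulVec_self_star u)

end Matrix

def hiddenRegression (b : Fin 4 → ℝ) : Fin 4 → ℝ := ![b 0, b 1, 0, 0]

def hiddenLoading (b : Fin 4 → ℝ) : Fin 4 → ℝ := ![0, 0, b 2, b 3]

theorem dotProduct_hiddenRegression_hiddenLoading (b : Fin 4 → ℝ) :
    hiddenRegression b ⬝ᵥ hiddenLoading b = 0 := by
  simp [hiddenRegression, hiddenLoading, dotProduct, Fin.sum_univ_four]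

theorem fSigma_eq_mul_diagonal_mul_conjTranspose_add_vecMulVec (b w : Fin 4 → ℝ) :
    let L := 1 + vecMulVec (hiddenLoading b) (hiddenRegression b)
    fSigma b w = L * diagonal w * Lᴴ + vecMulVec (hiddenLoading b) (star (hiddenLoading b)) := by
  ext i j
  fin_cases i <;> fin_cases j <;>
    simp [fSigma, hiddenLoading, hiddenRegression, mul_apply, Fin.sum_univ_four, one_apply] <;>
    ring

/-- For every `θ = (β, ω) ∈ ℝ⁴ × (0,∞)⁴`, the matrix `f_Σ(θ)` is
symmetric positive definite. -/
theorem stmt5 (b w : Fin 4 → ℝ) (hw : ∀ i, 0 < w i) : (fSigma b w).PosDef := by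
  rw [fSigma_eq_mul_diagonal_mul_conjTranspose_add_vecMulVec]
  exact (posDef_diagonal_iff.mpr hw).mul_mul_conjTranspose_add_vecMulVec
    (isUnit_one_add_vecMulVec_of_dotProduct_eq_zero
      (dotProduct_hiddenRegression_hiddenLoading b)) _
end

section
/- Let Z ~ N(0, I₂) in ℝ² and let L = {μ : μ₂ = μ₁} ∪ {μ : μ₂ = −μ₁} be the union of the two diagonal lines. Then the squared Euclidean distance d(Z, L)² is distributed as the minimum of two independent χ²₁ random variables; equivalently, P(d(Z,L)² > x) = P(χ²₁ > x)² for all x ≥ 0. -/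
/-!
Writing `p = (z₁, z₂)`, the squared distances from `p` to the lines `μ₂ = μ₁` and `μ₂ = -μ₁` are
`(z₂ - z₁)² / 2` and `(z₂ + z₁)² / 2`. For independent standard Gaussians `Z₁, Z₂` the pair
`(Z₂ - Z₁, Z₂ + Z₁)` is jointly Gaussian with covariance `Var Z₂ - Var Z₁ = 0`, so its coordinates
are independent `N(0, 2)` variables. Finally `U² / 2` is `χ²₁` for `U ~ N(0, 2)`: the substitution
`t = u²` turns the `Gamma(1/2, 1/2)` density on `(b², ∞)` into twice the Gaussian density on
`(b, ∞)`, and the Gaussian is symmetric.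
-/

open MeasureTheory ProbabilityTheory

noncomputable def sqDistTo (x : ℝ × ℝ) (S : Set (ℝ × ℝ)) : ℝ :=
  sInf ((fun s => (x.1 - s.1) ^ 2 + (x.2 - s.2) ^ 2) '' S)

noncomputable def chiSqMeasure (k : ℝ) : Measure ℝ := gammaMeasure (k / 2) (1 / 2)

open Set Real
open scoped NNReal ENNReal

lemma sqDistTo_union (p : ℝ × ℝ) {S T : Set (ℝ × ℝ)} (hS : S.Nonempty) (hT : T.Nonempty) :
    sqDistTo p (S ∪ T) = min (sqDistTo p S) (sqDistTo p T) := by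
  have h_bdd (U : Set (ℝ × ℝ)) :
      BddBelow ((fun s => (p.1 - s.1) ^ 2 + (p.2 - s.2) ^ 2) '' U) :=
    ⟨0, by rintro _ ⟨s, -, rfl⟩; positivity⟩
  rw [sqDistTo, image_union, csInf_union (h_bdd S) (hS.image _) (h_bdd T) (hT.image _)]
  rfl

lemma sqDistTo_line (p : ℝ × ℝ) (c : ℝ) :
    sqDistTo p {μ | μ.2 = c * μ.1} = (p.2 - c * p.1) ^ 2 / (1 + c ^ 2) := by
  have hc : 0 < 1 + c ^ 2 := by positivity
  -- `(t, c * t)` is the orthogonal projection of `p` onto the line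
  set t := (p.1 + c * p.2) / (1 + c ^ 2)
  have h_pythagoras (s : ℝ) : (p.1 - s) ^ 2 + (p.2 - c * s) ^ 2
      = (p.2 - c * p.1) ^ 2 / (1 + c ^ 2) + (1 + c ^ 2) * (s - t) ^ 2 := by
    simp only [t]
    field_simp
    ring
  refine IsLeast.csInf_eq ⟨⟨(t, c * t), rfl, by simp [h_pythagoras]⟩, ?_⟩
  rintro _ ⟨s, hs : s.2 = c * s.1, rfl⟩
  simp only [hs, h_pythagoras]
  have := mul_nonneg hc.le (sq_nonneg (s.1 - t))
  linarith

lemma sqDistTo_diagonals (p : ℝ × ℝ) :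
    sqDistTo p ({μ : ℝ × ℝ | μ.2 = μ.1} ∪ {μ : ℝ × ℝ | μ.2 = -μ.1})
      = min ((p.2 - p.1) ^ 2 / 2) ((p.2 + p.1) ^ 2 / 2) := by
  have h_diag : {μ : ℝ × ℝ | μ.2 = μ.1} = {μ | μ.2 = 1 * μ.1} := by simp
  have h_antidiag : {μ : ℝ × ℝ | μ.2 = -μ.1} = {μ | μ.2 = -1 * μ.1} := by simp
  rw [h_diag, h_antidiag, sqDistTo_union p ⟨0, by simp⟩ ⟨0, by simp⟩, sqDistTo_line,
    sqDistTo_line]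
  norm_num

namespace ProbabilityTheory

lemma gaussianReal_Iio_neg (v : ℝ≥0) (b : ℝ) :
    gaussianReal 0 v (Iio (-b)) = gaussianReal 0 v (Ioi b) := by
  have h_preimage : (fun x : ℝ => -x) ⁻¹' Ioi b = Iio (-b) := by
    ext x
    simp
  rw [← h_preimage, ← Measure.map_apply measurable_neg measurableSet_Ioi, gaussianReal_map_neg,
    neg_zero]

lemma ofReal_mul_gammaPDF_half_half_sq {u : ℝ} (hu : 0 < u) :
    ENNReal.ofReal (2 * u) * gammaPDF (1 / 2) (1 / 2) (u ^ 2) = 2 * gaussianPDF 0 1 u := by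
  rw [gammaPDF_of_nonneg (sq_nonneg u), gaussianPDF, show (2 : ℝ≥0∞) = ENNReal.ofReal 2 by simp,
    ← ENNReal.ofReal_mul (by positivity), ← ENNReal.ofReal_mul (by norm_num)]
  congr 1
  have h_rate : ((1 : ℝ) / 2) ^ ((1 : ℝ) / 2) = (√2)⁻¹ := by
    rw [← sqrt_eq_rpow, one_div, sqrt_inv]
  have h_power : (u ^ 2) ^ ((1 : ℝ) / 2 - 1) = u⁻¹ := by
    rw [show (1 : ℝ) / 2 - 1 = -(1 / 2) by norm_num, rpow_neg (sq_nonneg u), ← sqrt_eq_rpow,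
      sqrt_sq hu.le]
  rw [gaussianPDFReal, h_rate, h_power, Gamma_one_half_eq, NNReal.coe_one, mul_one,
    sqrt_mul (by norm_num)]
  field_simp
  ring_nf

lemma gammaMeasure_half_half_Ioi_sq {b : ℝ} (hb : 0 ≤ b) :
    gammaMeasure (1 / 2) (1 / 2) (Ioi (b ^ 2)) = 2 * gaussianReal 0 1 (Ioi b) := by
  have h_inj : InjOn (· ^ 2) (Ioi b) :=
    (pow_left_strictMonoOn₀ two_ne_zero).injOn.mono fun u hu => hb.trans (le_of_lt hu)
  have h_image : (· ^ 2) '' Ioi b = Ioi (b ^ 2) := by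
    ext t
    refine ⟨?_, fun ht => ⟨√t, (lt_sqrt hb).2 ht, sq_sqrt ((sq_nonneg b).trans ht.le)⟩⟩
    rintro ⟨u, hu, rfl⟩
    exact pow_lt_pow_left₀ hu hb two_ne_zero
  rw [gammaMeasure, withDensity_apply _ measurableSet_Ioi, ← h_image,
    lintegral_image_eq_lintegral_abs_deriv_mul measurableSet_Ioi
      (fun u _ => (hasDerivAt_pow 2 u).hasDerivWithinAt) h_inj,
    gaussianReal_apply _ one_ne_zero, ← lintegral_const_mul _ (measurable_gaussianPDF 0 1)]
  refine setLIntegral_congr_fun measurableSet_Ioi fun u hu => ?_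
  have hu : 0 < u := hb.trans_lt hu
  simpa [abs_of_pos hu] using ofReal_mul_gammaPDF_half_half_sq hu

lemma gaussianReal_map_sq_Ioi (a : ℝ) :
    (gaussianReal 0 1).map (· ^ 2) (Ioi a) = gammaMeasure (1 / 2) (1 / 2) (Ioi a) := by
  rw [Measure.map_apply (by fun_prop) measurableSet_Ioi]
  rcases lt_or_ge a 0 with ha | ha
  · have : IsProbabilityMeasure (gammaMeasure (1 / 2) (1 / 2)) :=
      isProbabilityMeasure_gammaMeasure (by norm_num) (by norm_num)
    have h_univ : (· ^ 2) ⁻¹' Ioi a = univ := eq_univ_of_forall fun u => ha.trans_le (sq_nonneg u)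
    rw [h_univ, measure_univ, eq_comm, ← prob_compl_eq_zero_iff measurableSet_Ioi, compl_Ioi]
    refine measure_mono_null (Iic_subset_Iio.2 ha) ?_
    rw [gammaMeasure, withDensity_apply _ measurableSet_Iio]
    exact lintegral_gammaPDF_of_nonpos le_rfl
  · obtain ⟨b, hb, rfl⟩ : ∃ b, 0 ≤ b ∧ b ^ 2 = a := ⟨√a, sqrt_nonneg a, sq_sqrt ha⟩
    have h_preimage : (· ^ 2) ⁻¹' Ioi (b ^ 2) = Iio (-b) ∪ Ioi b := by
      ext u
      simp only [mem_preimage, mem_Ioi, mem_union, mem_Iio, sq_lt_sq, abs_of_nonneg hb, lt_abs]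
      constructor <;> rintro (h | h) <;> first | (left; linarith) | (right; linarith)
    have h_disj : Disjoint (Iio (-b)) (Ioi b) :=
      (Iic_disjoint_Ioi (by linarith)).mono_left Iio_subset_Iic_self
    rw [h_preimage, measure_union h_disj measurableSet_Ioi, gaussianReal_Iio_neg, ← two_mul,
      gammaMeasure_half_half_Ioi_sq hb]

lemma gaussianReal_map_sq : (gaussianReal 0 1).map (· ^ 2) = chiSqMeasure 1 := by
  have : IsProbabilityMeasure (chiSqMeasure 1) :=
    isProbabilityMeasure_gammaMeasure (by norm_num) (by norm_num)
  have : IsProbabilityMeasure ((gaussianReal 0 1).map (· ^ 2)) :=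
    Measure.isProbabilityMeasure_map (by fun_prop)
  refine Measure.ext_of_Iic _ _ fun a => ?_
  rw [← compl_Ioi, prob_compl_eq_one_sub measurableSet_Ioi,
    prob_compl_eq_one_sub measurableSet_Ioi, gaussianReal_map_sq_Ioi, chiSqMeasure]

lemma gaussianReal_map_sq_div {v : ℝ≥0} (hv : v ≠ 0) :
    (gaussianReal 0 v).map (fun u => u ^ 2 / (v : ℝ)) = chiSqMeasure 1 := by
  have h_standardize : (gaussianReal 0 v).map (· / √v) = gaussianReal 0 1 := by
    rw [gaussianReal_map_div_const, zero_div]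
    congr
    ext
    simp [hv]
  have h_comp : (fun u : ℝ => u ^ 2 / v) = (· ^ 2) ∘ (· / √v) := by
    ext u
    simp [div_pow]
  rw [h_comp, ← Measure.map_map (by fun_prop) (by fun_prop), h_standardize, gaussianReal_map_sq]

lemma measure_sq_div_gt_of_map_eq_gaussianReal {Ω : Type*} {mΩ : MeasurableSpace Ω}
    {P : Measure Ω} {W : Ω → ℝ} {v : ℝ≥0} (hv : v ≠ 0) (hW : P.map W = gaussianReal 0 v)
    (x : ℝ) : P {ω | x < W ω ^ 2 / v} = chiSqMeasure 1 (Ioi x) := by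
  have hW_law : HasLaw W (gaussianReal 0 v) P := ⟨.of_map_ne_zero (by simp [hW, NeZero.ne]), hW⟩
  exact (HasLaw.comp ⟨by fun_prop, gaussianReal_map_sq_div hv⟩ hW_law).measure_eq
    (p := (x < ·)) measurableSet_Ioi

lemma gaussianReal_sub_gaussianReal_of_indepFun {Ω : Type*} {mΩ : MeasurableSpace Ω}
    {P : Measure Ω} {m₁ m₂ : ℝ} {v₁ v₂ : ℝ≥0} {X Y : Ω → ℝ} (hXY : IndepFun X Y P)
    (hX : P.map X = gaussianReal m₁ v₁) (hY : P.map Y = gaussianReal m₂ v₂) :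
    P.map (X - Y) = gaussianReal (m₁ - m₂) (v₁ + v₂) := by
  have hY_meas : AEMeasurable Y P := .of_map_ne_zero (by simp [hY, NeZero.ne])
  have h_neg : P.map (-Y) = gaussianReal (-m₂) v₂ := by
    rw [← gaussianReal_map_neg, ← hY, AEMeasurable.map_map_of_aemeasurable (by fun_prop) hY_meas]
    rfl
  rw [sub_eq_add_neg, sub_eq_add_neg]
  exact gaussianReal_add_gaussianReal_of_indepFun (hXY.comp measurable_id measurable_neg) hX h_neg

lemma HasGaussianLaw.indepFun_sub_add {Ω : Type*} {mΩ : MeasurableSpace Ω} {P : Measure Ω}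
    {X Y : Ω → ℝ} (hX : HasGaussianLaw X P) (hY : HasGaussianLaw Y P) (hXY : IndepFun X Y P)
    (hvar : Var[X; P] = Var[Y; P]) :
    IndepFun (X - Y) (X + Y) P := by
  have := hX.isProbabilityMeasure
  have h_joint : HasGaussianLaw (fun ω => ((X - Y) ω, (X + Y) ω)) P :=
    (hXY.hasGaussianLaw hX hY).map_fun
      ((ContinuousLinearMap.fst ℝ ℝ ℝ - ContinuousLinearMap.snd ℝ ℝ ℝ).prod
        (ContinuousLinearMap.fst ℝ ℝ ℝ + ContinuousLinearMap.snd ℝ ℝ ℝ))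
  refine h_joint.indepFun_of_covariance_eq_zero ?_
  have hX2 := hX.memLp_two
  have hY2 := hY.memLp_two
  rw [covariance_sub_left hX2 hY2 (hX2.add hY2), covariance_add_right hX2 hX2 hY2,
    covariance_add_right hY2 hX2 hY2, covariance_self hX2.aemeasurable,
    covariance_self hY2.aemeasurable, covariance_comm Y X, hvar]
  ring

end ProbabilityTheory

theorem stmt10_general {Ω : Type*} [MeasureSpace Ω]
    (Z : Ω → ℝ × ℝ)
    (h1 : Measure.map (fun ω => (Z ω).1) ℙ = gaussianReal 0 1)
    (h2 : Measure.map (fun ω => (Z ω).2) ℙ = gaussianReal 0 1)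
    (hind : IndepFun (fun ω => (Z ω).1) (fun ω => (Z ω).2) ℙ) :
    ∀ x : ℝ, 0 ≤ x →
      (ℙ {ω | x < sqDistTo (Z ω) ({μ : ℝ × ℝ | μ.2 = μ.1} ∪ {μ : ℝ × ℝ | μ.2 = -μ.1})}).toReal
        = ((chiSqMeasure 1 (Set.Ioi x)).toReal) ^ 2 := by
  intro x _
  set X := fun ω => (Z ω).2
  set Y := fun ω => (Z ω).1
  have hX : HasLaw X (gaussianReal 0 1) ℙ := ⟨.of_map_ne_zero (by simp [h2, NeZero.ne]), h2⟩
  have hY : HasLaw Y (gaussianReal 0 1) ℙ := ⟨.of_map_ne_zero (by simp [h1, NeZero.ne]), h1⟩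
  have h_indep : IndepFun (X - Y) (X + Y) ℙ :=
    hX.hasGaussianLaw.indepFun_sub_add hY.hasGaussianLaw hind.symm
      (by rw [hX.variance_eq, hY.variance_eq])
  have h_tail (W : Ω → ℝ) (hW : Measure.map W ℙ = gaussianReal 0 2) :
      ℙ (W ⁻¹' {w | x < w ^ 2 / 2}) = chiSqMeasure 1 (Ioi x) := by
    simpa using measure_sq_div_gt_of_map_eq_gaussianReal two_ne_zero hW x
  have h_event : {ω | x < sqDistTo (Z ω) ({μ : ℝ × ℝ | μ.2 = μ.1} ∪ {μ : ℝ × ℝ | μ.2 = -μ.1})}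
      = (X - Y) ⁻¹' {w | x < w ^ 2 / 2} ∩ (X + Y) ⁻¹' {w | x < w ^ 2 / 2} := by
    ext ω
    simp [sqDistTo_diagonals, X, Y]
  have h_meas : MeasurableSet {w : ℝ | x < w ^ 2 / 2} :=
    measurableSet_lt (by fun_prop) (by fun_prop)
  rw [h_event, h_indep.measure_inter_preimage_eq_mul _ _ h_meas h_meas,
    h_tail _ (by simpa [one_add_one_eq_two] using
      gaussianReal_sub_gaussianReal_of_indepFun hind.symm h2 h1),
    h_tail _ (by simpa [one_add_one_eq_two] using
      gaussianReal_add_gaussianReal_of_indepFun hind.symm h2 h1),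
    ENNReal.toReal_mul, sq]

/-- For `Z ~ N(0, I₂)` and `L` the union of the lines `μ₂ = μ₁` and
`μ₂ = −μ₁`, the squared distance `d(Z, L)²` is distributed as the minimum of two
independent `χ²₁` random variables: `P(d(Z,L)² > x) = P(χ²₁ > x)²` for all `x ≥ 0`. -/
theorem stmt10 {Ω : Type*} [MeasureSpace Ω] (hP : IsProbabilityMeasure (ℙ : Measure Ω))
    (Z : Ω → ℝ × ℝ)
    (h1 : Measure.map (fun ω => (Z ω).1) ℙ = gaussianReal 0 1)
    (h2 : Measure.map (fun ω => (Z ω).2) ℙ = gaussianReal 0 1)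
    (hind : IndepFun (fun ω => (Z ω).1) (fun ω => (Z ω).2) ℙ) :
    ∀ x : ℝ, 0 ≤ x →
      (ℙ {ω | x < sqDistTo (Z ω) ({μ : ℝ × ℝ | μ.2 = μ.1} ∪ {μ : ℝ × ℝ | μ.2 = -μ.1})}).toReal
        = ((chiSqMeasure 1 (Set.Ioi x)).toReal) ^ 2 :=
  stmt10_general Z h1 h2 hind
end

section
/- Let C ⊆ ℝ² be the nodal cubic {μ : μ₂² = μ₁³ + μ₁²} restricted to a neighborhood of 0, and let x ∈ ℝ². For every x in a sufficiently small punctured neighborhood of 0 not on the lines μ₂ = ±μ₁, a nearest point of C to x exists (C is closed), and d(x, C) ≤ min(|x₂ − x₁|, |x₂ + x₁|)/√2 + O(‖x‖²) as x → 0. -/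
open Metric

private lemma stmt18_sqrt_tri (u v w d : ℝ) (hd : 0 ≤ d) (h : |v| ≤ |w| + d) :
    Real.sqrt (u^2 + v^2) ≤ Real.sqrt (u^2 + w^2) + d := by
  have hs : Real.sqrt (u^2 + w^2) ^ 2 = u^2 + w^2 := Real.sq_sqrt (by positivity)
  have h1 : |w| ≤ Real.sqrt (u^2 + w^2) := by
    rw [← Real.sqrt_sq_eq_abs]
    exact Real.sqrt_le_sqrt (by nlinarith)
  have h0 : 0 ≤ Real.sqrt (u^2 + w^2) := Real.sqrt_nonneg _
  have := abs_nonneg v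
  have := abs_nonneg w
  rw [show Real.sqrt (u^2+w^2) + d = Real.sqrt ((Real.sqrt (u^2+w^2) + d)^2) from
    (Real.sqrt_sq (by linarith)).symm]
  apply Real.sqrt_le_sqrt
  nlinarith [sq_abs v, sq_abs w]

private lemma stmt18_branch (ε : ℝ) (hε : ε^2 = 1) (x : EuclideanSpace ℝ (Fin 2))
    (hx : ‖x‖ ≤ 1) :
    infDist x {μ : EuclideanSpace ℝ (Fin 2) | (μ 1) ^ 2 = (μ 0) ^ 3 + (μ 0) ^ 2}
      ≤ |x 1 - ε * x 0| / Real.sqrt 2 + ‖x‖ ^ 2 := by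
  set a : ℝ := (x 0 + ε * x 1) / 2 with ha
  have hεabs : |ε| = 1 := by
    rcases abs_cases ε with ⟨h, _⟩ | ⟨h, _⟩ <;> nlinarith
  have hnorm : ‖x‖^2 = (x 0)^2 + (x 1)^2 := by
    rw [EuclideanSpace.norm_eq, Real.sq_sqrt (by positivity)]
    simp [Fin.sum_univ_two]
  have ha2 : a^2 ≤ ‖x‖^2 := by
    rw [hnorm, ha]; nlinarith [sq_nonneg (x 0 - ε * x 1)]
  have haa : |a| ≤ 1 := by
    rw [← Real.sqrt_one, ← Real.sqrt_sq_eq_abs]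
    exact Real.sqrt_le_sqrt (by nlinarith [norm_nonneg x])
  have h1a : (0:ℝ) ≤ 1 + a := by
    rcases abs_le.mp haa with ⟨h, _⟩; linarith
  set s : ℝ := Real.sqrt (1 + a) with hs
  have hs2 : s^2 = 1 + a := Real.sq_sqrt h1a
  have hs0 : 0 ≤ s := Real.sqrt_nonneg _
  have hsa : |s - 1| ≤ |a| := by
    rcases abs_cases (s-1) with ⟨h1, h2⟩ | ⟨h1, h2⟩ <;>
      rcases abs_cases a with ⟨h3, h4⟩ | ⟨h3, h4⟩ <;> nlinarith
  set c : EuclideanSpace ℝ (Fin 2) := (WithLp.equiv 2 (Fin 2 → ℝ)).symm ![a, ε * a * s] with hc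
  have hc0 : c 0 = a := rfl
  have hc1 : c 1 = ε * a * s := rfl
  have hcmem : c ∈ {μ : EuclideanSpace ℝ (Fin 2) | (μ 1) ^ 2 = (μ 0) ^ 3 + (μ 0) ^ 2} := by
    simp only [Set.mem_setOf_eq, hc0, hc1]
    have h2 : (ε * a * s)^2 = ε^2 * (a^2 * s^2) := by ring
    rw [h2, hε, one_mul, hs2]; ring
  have hd : dist x c = Real.sqrt ((x 0 - a)^2 + (x 1 - ε * a * s)^2) := by
    rw [EuclideanSpace.dist_eq]
    simp [Fin.sum_univ_two, hc0, hc1, Real.dist_eq, sq_abs]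
  calc infDist x _ ≤ dist x c := infDist_le_dist_of_mem hcmem
    _ = Real.sqrt ((x 0 - a)^2 + (x 1 - ε * a * s)^2) := hd
    _ ≤ Real.sqrt ((x 0 - a)^2 + (x 1 - ε * a)^2) + |a| * |s - 1| := by
        apply stmt18_sqrt_tri _ _ _ _ (by positivity)
        have h' : x 1 - ε * a * s = (x 1 - ε * a) - ε * a * (s - 1) := by ring
        rw [h']
        calc |x 1 - ε * a - ε * a * (s - 1)| ≤ |x 1 - ε * a| + |ε * a * (s-1)| :=
              abs_sub _ _
          _ = |x 1 - ε * a| + |a| * |s-1| := by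
              rw [abs_mul, abs_mul, hεabs, one_mul]
    _ ≤ |x 1 - ε * x 0| / Real.sqrt 2 + ‖x‖ ^ 2 := by
        have he : (x 0 - a)^2 + (x 1 - ε * a)^2 = (x 1 - ε * x 0)^2 / 2 := by
          rw [ha]
          linear_combination ((x 1 ^ 2 - x 0 ^ 2) / 4 - (x 1 - ε * x 0) * x 1 / 2
            + (ε ^ 2 - 1) * x 1 ^ 2 / 4) * hε
        have h2 : Real.sqrt ((x 0 - a)^2 + (x 1 - ε * a)^2) = |x 1 - ε * x 0| / Real.sqrt 2 := by
          rw [he, Real.sqrt_div (sq_nonneg _), Real.sqrt_sq_eq_abs]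
        rw [h2]
        have : |a| * |s - 1| ≤ ‖x‖^2 :=
          calc |a| * |s-1| ≤ |a| * |a| := mul_le_mul_of_nonneg_left hsa (abs_nonneg a)
            _ = a^2 := by rw [← sq_abs]; ring
            _ ≤ ‖x‖^2 := ha2
        linarith

/-- Let `C = {μ ∈ ℝ² : μ₂² = μ₁³ + μ₁²}` be the nodal cubic (with the
Euclidean metric on `ℝ²`). `C` is closed, so for every `x` in a sufficiently small
punctured neighborhood of `0` not on the lines `μ₂ = ±μ₁`, a nearest point of `C`
to `x` exists, and `d(x, C) ≤ min(|x₂ − x₁|, |x₂ + x₁|)/√2 + O(‖x‖²)` as `x → 0`. -/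
theorem stmt18 :
    IsClosed {μ : EuclideanSpace ℝ (Fin 2) | (μ 1) ^ 2 = (μ 0) ^ 3 + (μ 0) ^ 2} ∧
    ∃ K > (0 : ℝ), ∃ r > (0 : ℝ), ∀ x : EuclideanSpace ℝ (Fin 2),
      ‖x‖ < r → x ≠ 0 → x 1 ≠ x 0 → x 1 ≠ -x 0 →
        (∃ c ∈ {μ : EuclideanSpace ℝ (Fin 2) | (μ 1) ^ 2 = (μ 0) ^ 3 + (μ 0) ^ 2},
            dist x c = infDist x {μ : EuclideanSpace ℝ (Fin 2) |
              (μ 1) ^ 2 = (μ 0) ^ 3 + (μ 0) ^ 2}) ∧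
          infDist x {μ : EuclideanSpace ℝ (Fin 2) | (μ 1) ^ 2 = (μ 0) ^ 3 + (μ 0) ^ 2}
            ≤ min |x 1 - x 0| |x 1 + x 0| / Real.sqrt 2 + K * ‖x‖ ^ 2 := by
  have hcont0 : Continuous fun μ : EuclideanSpace ℝ (Fin 2) => μ 0 :=
    (EuclideanSpace.proj (0 : Fin 2)).continuous
  have hcont1 : Continuous fun μ : EuclideanSpace ℝ (Fin 2) => μ 1 :=
    (EuclideanSpace.proj (1 : Fin 2)).continuous
  have hC : IsClosed {μ : EuclideanSpace ℝ (Fin 2) | (μ 1) ^ 2 = (μ 0) ^ 3 + (μ 0) ^ 2} :=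
    isClosed_eq (hcont1.pow 2) ((hcont0.pow 3).add (hcont0.pow 2))
  have h0mem : (0 : EuclideanSpace ℝ (Fin 2)) ∈
      {μ : EuclideanSpace ℝ (Fin 2) | (μ 1) ^ 2 = (μ 0) ^ 3 + (μ 0) ^ 2} := by
    simp [Set.mem_setOf_eq]
  refine ⟨hC, 1, one_pos, 1, one_pos, fun x hxr _ _ _ => ?_⟩
  constructor
  · obtain ⟨c, hcmem, hcd⟩ := hC.exists_infDist_eq_dist ⟨0, h0mem⟩ x
    exact ⟨c, hcmem, hcd.symm⟩
  · rw [one_mul]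
    rcases le_total |x 1 - x 0| |x 1 + x 0| with h | h
    · rw [min_eq_left h]
      have := stmt18_branch 1 (by norm_num) x hxr.le
      rwa [one_mul] at this
    · rw [min_eq_right h]
      have := stmt18_branch (-1) (by norm_num) x hxr.le
      have he : x 1 - (-1) * x 0 = x 1 + x 0 := by ring
      rwa [he] at this
end

section
/- For a trivariate normal distribution N₃(μ, Σ) with Σ positive definite, the conjunction of X₁ ⊥ X₂ and X₁ ⊥ X₂ | X₃ holds if and only if X₁ ⊥ (X₂, X₃) or X₂ ⊥ (X₁, X₃). -/
/-- For a trivariate Gaussian `N₃(μ, Σ)` with `Σ` positive definite,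
`X₁ ⊥ X₂` corresponds to `σ₁₂ = 0`. -/
def indep12 (S : Matrix (Fin 3) (Fin 3) ℝ) : Prop := S 0 1 = 0

/-- `X₁ ⊥ X₂ | X₃` corresponds to `σ₁₂σ₃₃ − σ₁₃σ₂₃ = 0`. -/
def condIndep12given3 (S : Matrix (Fin 3) (Fin 3) ℝ) : Prop :=
  S 0 1 * S 2 2 - S 0 2 * S 1 2 = 0

/-- `X₁ ⊥ (X₂, X₃)` corresponds to `σ₁₂ = 0 ∧ σ₁₃ = 0`. -/
def indep1_23 (S : Matrix (Fin 3) (Fin 3) ℝ) : Prop := S 0 1 = 0 ∧ S 0 2 = 0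

/-- `X₂ ⊥ (X₁, X₃)` corresponds to `σ₁₂ = 0 ∧ σ₂₃ = 0`. -/
def indep2_13 (S : Matrix (Fin 3) (Fin 3) ℝ) : Prop := S 0 1 = 0 ∧ S 1 2 = 0

/-- For a trivariate normal distribution with positive definite
covariance matrix, `X₁ ⊥ X₂` and `X₁ ⊥ X₂ | X₃` hold simultaneously iff
`X₁ ⊥ (X₂,X₃)` or `X₂ ⊥ (X₁,X₃)`. -/
theorem stmt19 (S : Matrix (Fin 3) (Fin 3) ℝ) (hpd : S.PosDef) :
    (indep12 S ∧ condIndep12given3 S) ↔ (indep1_23 S ∨ indep2_13 S) := by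
  unfold indep12 condIndep12given3 indep1_23 indep2_13
  constructor
  · rintro ⟨h1, h2⟩
    rw [h1] at h2
    simp at h2
    rcases h2 with h | h
    · exact Or.inl ⟨h1, h⟩
    · exact Or.inr ⟨h1, h⟩
  · rintro (⟨h1, h2⟩ | ⟨h1, h2⟩) <;> simp [h1, h2]
end
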